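/- For nonnegative integer N and variables y, z: Σ_{k=0}^{N} [N choose k]_q (y;q)_k z^k = Σ_{k=0}^{N} [N choose k]_q (yz;q)_{N−k} z^k. -/

import Mathlib

def IsDistinctPartition (π : List ℕ) : Prop :=
  π.Chain' (· > ·) ∧ ∀ p ∈ π, 0 < p

def IsPartition (π : List ℕ) : Prop :=
  π.Chain' (· ≥ ·) ∧ ∀ p ∈ π, 0 < p

def oddIdxOdd (π : List ℕ) : ℕ :=
  ((π.zipIdx.map Prod.swap).filter fun p => p.1 % 2 == 0 && p.2 % 2 == 1).length

def evenIdxOdd (π : List ℕ) : ℕ :=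
  ((π.zipIdx.map Prod.swap).filter fun p => p.1 % 2 == 1 && p.2 % 2 == 1).length

def bgRank (π : List ℕ) : ℤ := (oddIdxOdd π : ℤ) - evenIdxOdd π

def altSum : List ℕ → ℤ
  | [] => 0
  | a :: t => (a : ℤ) - altSum t

noncomputable def gaussPoly : ℕ → ℕ → Polynomial ℚ
  | _, 0 => 1
  | 0, _ + 1 => 0
  | m + 1, r + 1 => gaussPoly m r + Polynomial.X ^ (r + 1) * gaussPoly m (r + 1)

noncomputable def gaussZ (m : ℕ) (r : ℤ) : Polynomial ℚ :=
  if 0 ≤ r then gaussPoly m r.toNat else 0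

/-! By the q-binomial theorem `(y;q)_k = ∑_j [k, j] (-y)^j q^(j choose 2)`, each side of the
identity becomes a double sum of products of two Gaussian binomials. The q-trinomial identities
`[N, k] [k, j] = [N, j] [N - j, k - j]` and `[N, k] [N - k, j] = [N, j] [N - j, k]` (proved by
clearing the nonzero denominators `(q;q)_a (q;q)_b (q;q)_c` in `ℚ[X]`) bring both to the common
form `∑_j [N, j] (-y z)^j q^(j choose 2) H_(N - j)(z)`, where `H_n(z) = ∑_m [n, m] z^m` is the
Rogers–Szegő polynomial. -/

open Polynomial Finset

theorem gaussPoly_zero_right (m : ℕ) : gaussPoly m 0 = 1 := by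
  cases m <;> rfl

theorem gaussPoly_succ_succ (m r : ℕ) :
    gaussPoly (m + 1) (r + 1) = gaussPoly m r + X ^ (r + 1) * gaussPoly m (r + 1) :=
  rfl

theorem gaussPoly_eq_zero_of_lt : ∀ {m r : ℕ}, m < r → gaussPoly m r = 0
  | 0, _ + 1, _ => rfl
  | m + 1, r + 1, h => by
    rw [gaussPoly_succ_succ, gaussPoly_eq_zero_of_lt (by omega : m < r),
      gaussPoly_eq_zero_of_lt (by omega : m < r + 1), mul_zero, add_zero]

theorem gaussPoly_self : ∀ m : ℕ, gaussPoly m m = 1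
  | 0 => rfl
  | m + 1 => by
    rw [gaussPoly_succ_succ, gaussPoly_self m, gaussPoly_eq_zero_of_lt (Nat.lt_succ_self m),
      mul_zero, add_zero]

noncomputable def qFactorial (n : ℕ) : ℚ[X] :=
  ∏ i ∈ range n, (1 - X ^ (i + 1))

theorem qFactorial_succ (n : ℕ) : qFactorial (n + 1) = qFactorial n * (1 - X ^ (n + 1)) :=
  prod_range_succ _ _

theorem qFactorial_ne_zero (n : ℕ) : qFactorial n ≠ 0 := by
  refine prod_ne_zero_iff.2 fun i _ h => ?_
  simpa using congrArg (eval 0) h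

theorem gaussPoly_add_mul_qFactorial :
    ∀ a b : ℕ, gaussPoly (a + b) a * (qFactorial a * qFactorial b) = qFactorial (a + b)
  | 0, b => by simp [gaussPoly_zero_right, qFactorial]
  | a + 1, 0 => by simp [gaussPoly_self, qFactorial]
  | a + 1, b + 1 => by
    have h₁ := gaussPoly_add_mul_qFactorial a (b + 1)
    have h₂ := gaussPoly_add_mul_qFactorial (a + 1) b
    rw [show a + (b + 1) = a + b + 1 by omega, qFactorial_succ b] at h₁
    rw [show a + 1 + b = a + b + 1 by omega, qFactorial_succ a] at h₂
    rw [show a + 1 + (b + 1) = a + b + 1 + 1 by omega, gaussPoly_succ_succ,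
      qFactorial_succ a, qFactorial_succ b, qFactorial_succ (a + b + 1)]
    linear_combination (1 - X ^ (a + 1)) * h₁ + X ^ (a + 1) * (1 - X ^ (b + 1)) * h₂

theorem gaussPoly_mul_gaussPoly_mul_qFactorial (a b c : ℕ) :
    gaussPoly (a + b + c) a * gaussPoly (b + c) b * (qFactorial a * qFactorial b * qFactorial c) =
      qFactorial (a + b + c) := by
  have h₁ := gaussPoly_add_mul_qFactorial a (b + c)
  have h₂ := gaussPoly_add_mul_qFactorial b c
  rw [← add_assoc] at h₁
  linear_combination gaussPoly (a + b + c) a * qFactorial a * h₂ + h₁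

theorem gaussPoly_mul_gaussPoly_sub_comm {n j k : ℕ} (h : j + k ≤ n) :
    gaussPoly n k * gaussPoly (n - k) j = gaussPoly n j * gaussPoly (n - j) k := by
  obtain ⟨c, rfl⟩ := Nat.exists_eq_add_of_le h
  rw [show j + k + c - k = j + c by omega, show j + k + c - j = k + c by omega]
  refine mul_right_cancel₀ (mul_ne_zero (mul_ne_zero (qFactorial_ne_zero k)
    (qFactorial_ne_zero j)) (qFactorial_ne_zero c)) ?_
  have h₁ := gaussPoly_mul_gaussPoly_mul_qFactorial k j c
  have h₂ := gaussPoly_mul_gaussPoly_mul_qFactorial j k c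
  rw [add_comm k j] at h₁
  linear_combination h₁ - h₂

theorem gaussPoly_add_mul_gaussPoly {n j m : ℕ} (h : j + m ≤ n) :
    gaussPoly n (j + m) * gaussPoly (j + m) j = gaussPoly n j * gaussPoly (n - j) m := by
  obtain ⟨c, rfl⟩ := Nat.exists_eq_add_of_le h
  rw [show j + m + c - j = m + c by omega]
  refine mul_right_cancel₀ (mul_ne_zero (mul_ne_zero (qFactorial_ne_zero j)
    (qFactorial_ne_zero m)) (qFactorial_ne_zero c)) ?_
  have h₁ := gaussPoly_add_mul_qFactorial (j + m) c
  have h₂ := gaussPoly_add_mul_qFactorial j m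
  linear_combination gaussPoly (j + m + c) (j + m) * qFactorial c * h₂ + h₁ -
    gaussPoly_mul_gaussPoly_mul_qFactorial j m c

section QAlgebra

variable {R : Type*} [CommRing R]

def qPochhammer (a q : R) (n : ℕ) : R :=
  ∏ i ∈ range n, (1 - a * q ^ i)

theorem qPochhammer_succ' (a q : R) (n : ℕ) :
    qPochhammer a q (n + 1) = qPochhammer (a * q) q n * (1 - a) := by
  simp only [qPochhammer, prod_range_succ', pow_succ', pow_zero, mul_one, mul_assoc]

variable [Algebra ℚ R]

theorem qPochhammer_eq_sum_gaussPoly (y q : R) (k : ℕ) :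
    qPochhammer y q k =
      ∑ j ∈ range (k + 1), aeval q (gaussPoly k j) * ((-y) ^ j * q ^ j.choose 2) := by
  induction k generalizing y with
  | zero => simp [qPochhammer, gaussPoly_zero_right]
  | succ k ih =>
    -- `(y;q)_(k+1) = (yq;q)_k (1 - y)`; split `[k+1, j+1]` by the q-Pascal rule and match the
    -- two halves against the expansion of `(yq;q)_k` times `-y` and times `1`.
    have h₁ : ∑ j ∈ range (k + 1),
          aeval q (gaussPoly k j) * ((-y) ^ (j + 1) * q ^ (j + 1).choose 2) =
        (∑ j ∈ range (k + 1), aeval q (gaussPoly k j) * ((-(y * q)) ^ j * q ^ j.choose 2)) *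
          (-y) := by
      rw [sum_mul]
      refine sum_congr rfl fun j _ => ?_
      rw [Nat.choose_succ_succ, Nat.choose_one_right]
      ring
    have h₂ : ∑ j ∈ range (k + 1),
          aeval q (X ^ (j + 1) * gaussPoly k (j + 1)) * ((-y) ^ (j + 1) * q ^ (j + 1).choose 2) + 1 =
        ∑ j ∈ range (k + 1), aeval q (gaussPoly k j) * ((-(y * q)) ^ j * q ^ j.choose 2) := by
      let g j := aeval q (X ^ j * gaussPoly k j) * ((-y) ^ j * q ^ j.choose 2)
      calc _ = ∑ j ∈ range (k + 2), g j := by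
            rw [sum_range_succ' g (k + 1)]; simp [g, gaussPoly_zero_right]
        _ = ∑ j ∈ range (k + 1), g j := by
            simp [g, sum_range_succ _ (k + 1), gaussPoly_eq_zero_of_lt]
        _ = _ := sum_congr rfl fun j _ => by simp only [g, map_mul, map_pow, aeval_X]; ring
    rw [qPochhammer_succ', ih, sum_range_succ' _ (k + 1)]
    simp only [gaussPoly_succ_succ, gaussPoly_zero_right, map_add, add_mul, sum_add_distrib,
      map_one, pow_zero, Nat.choose_zero_succ, mul_one]
    linear_combination -h₁ - h₂

noncomputable def rogersSzego (q z : R) (n : ℕ) : R :=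
  ∑ m ∈ range (n + 1), aeval q (gaussPoly n m) * z ^ m

theorem sum_gaussPoly_mul_qPochhammer_eq_sum_rogersSzego (q y z : R) (N : ℕ) :
    ∑ k ∈ range (N + 1), aeval q (gaussPoly N k) * qPochhammer y q k * z ^ k =
      ∑ j ∈ range (N + 1), aeval q (gaussPoly N j) * ((-(y * z)) ^ j * q ^ j.choose 2) *
        rogersSzego q z (N - j) := by
  calc _ = ∑ k ∈ range (N + 1), ∑ j ∈ range (k + 1),
          aeval q (gaussPoly N k * gaussPoly k j) * ((-y) ^ j * q ^ j.choose 2) * z ^ k := by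
        refine sum_congr rfl fun k _ => ?_
        rw [qPochhammer_eq_sum_gaussPoly, mul_sum, sum_mul]
        exact sum_congr rfl fun j _ => by rw [map_mul]; ring
    _ = ∑ j ∈ range (N + 1), ∑ k ∈ Ico j (N + 1),
          aeval q (gaussPoly N k * gaussPoly k j) * ((-y) ^ j * q ^ j.choose 2) * z ^ k :=
        sum_comm' fun k j => by simp only [mem_range, mem_Ico]; omega
    _ = _ := by
        refine sum_congr rfl fun j hjN => ?_
        have hj : j ≤ N := Nat.lt_succ_iff.mp (mem_range.mp hjN)
        rw [sum_Ico_eq_sum_range, Nat.succ_sub hj, rogersSzego, mul_sum]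
        refine sum_congr rfl fun m hm => ?_
        rw [mem_range] at hm
        rw [gaussPoly_add_mul_gaussPoly (by omega), map_mul, pow_add]
        ring

theorem sum_gaussPoly_mul_qPochhammer_sub_eq_sum_rogersSzego (q y z : R) (N : ℕ) :
    ∑ k ∈ range (N + 1), aeval q (gaussPoly N k) * qPochhammer y q (N - k) * z ^ k =
      ∑ j ∈ range (N + 1), aeval q (gaussPoly N j) * ((-y) ^ j * q ^ j.choose 2) *
        rogersSzego q z (N - j) := by
  calc _ = ∑ k ∈ range (N + 1), ∑ j ∈ range (N - k + 1),
          aeval q (gaussPoly N k * gaussPoly (N - k) j) * ((-y) ^ j * q ^ j.choose 2) * z ^ k := by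
        refine sum_congr rfl fun k _ => ?_
        rw [qPochhammer_eq_sum_gaussPoly, mul_sum, sum_mul]
        exact sum_congr rfl fun j _ => by rw [map_mul]; ring
    _ = ∑ j ∈ range (N + 1), ∑ k ∈ range (N - j + 1),
          aeval q (gaussPoly N k * gaussPoly (N - k) j) * ((-y) ^ j * q ^ j.choose 2) * z ^ k :=
        sum_comm' fun k j => by simp only [mem_range]; omega
    _ = _ := by
        refine sum_congr rfl fun j hj => ?_
        rw [rogersSzego, mul_sum]
        refine sum_congr rfl fun k hk => ?_
        rw [mem_range] at hj hk
        rw [gaussPoly_mul_gaussPoly_sub_comm (by omega), map_mul]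
        ring

theorem sum_gaussPoly_mul_qPochhammer_eq_sum_qPochhammer_sub (q y z : R) (N : ℕ) :
    ∑ k ∈ range (N + 1), aeval q (gaussPoly N k) * qPochhammer y q k * z ^ k =
      ∑ k ∈ range (N + 1), aeval q (gaussPoly N k) * qPochhammer (y * z) q (N - k) * z ^ k := by
  rw [sum_gaussPoly_mul_qPochhammer_eq_sum_rogersSzego,
    sum_gaussPoly_mul_qPochhammer_sub_eq_sum_rogersSzego]

end QAlgebra

theorem stmt13 (N : ℕ) :
    let q : MvPolynomial (Fin 3) ℚ := MvPolynomial.X 0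
    let y : MvPolynomial (Fin 3) ℚ := MvPolynomial.X 1
    let z : MvPolynomial (Fin 3) ℚ := MvPolynomial.X 2
    ∑ k ∈ Finset.range (N + 1),
      Polynomial.aeval q (gaussPoly N k) * (∏ n ∈ Finset.range k, (1 - y * q ^ n)) * z ^ k =
    ∑ k ∈ Finset.range (N + 1),
      Polynomial.aeval q (gaussPoly N k) *
        (∏ n ∈ Finset.range (N - k), (1 - y * z * q ^ n)) * z ^ k := by
  intro q y z
  exact sum_gaussPoly_mul_qPochhammer_eq_sum_qPochhammer_sub q y z N
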